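/- For every n ≥ 1, the pair (F_{2n}, F_{2n+1}) of consecutive Fibonacci numbers is a P-position of Wythoff's game; moreover, these are the only P-positions of Wythoff's game with both entries positive in which one of the entries is a Fibonacci number. -/

import Mathlib

/-- A move in a CM-Nim game with permissible family `𝒮`: choose a permissible
(nonempty) set `S` of jars and a positive number `c` of cookies with `c ≤ p i`
for every `i ∈ S`, and take `c` cookies from each jar in `S`. -/
def CMMove {k : ℕ} (𝒮 : Set (Finset (Fin k))) (p q : Fin k → ℕ) : Prop :=
  ∃ S ∈ 𝒮, S.Nonempty ∧ ∃ c > 0, (∀ i ∈ S, c ≤ p i ∧ q i = p i - c) ∧ ∀ i ∉ S, q i = p i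

lemma CMMove.sum_lt {k : ℕ} {𝒮 : Set (Finset (Fin k))} {p q : Fin k → ℕ}
    (h : CMMove 𝒮 p q) : ∑ i, q i < ∑ i, p i := by
  obtain ⟨S, hS, ⟨i0, hi0⟩, c, hc, h1, h2⟩ := h
  apply Finset.sum_lt_sum
  · intro i _
    by_cases hi : i ∈ S
    · have := h1 i hi; omega
    · rw [h2 i hi]
  · exact ⟨i0, Finset.mem_univ _, by have := h1 i0 hi0; omega⟩

/-- P-positions of a CM-Nim game, defined by well-founded recursion on the
total number of cookies: a position is a P-position iff every move from it
leads to a position that is not a P-position. -/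
def CMPPos {k : ℕ} (𝒮 : Set (Finset (Fin k))) (p : Fin k → ℕ) : Prop :=
  ∀ q, CMMove 𝒮 p q → ¬ CMPPos 𝒮 q
termination_by ∑ i, p i
decreasing_by exact CMMove.sum_lt (by assumption)

/-- Nim with `k` piles: only singletons are permissible. -/
def NimSets (k : ℕ) : Set (Finset (Fin k)) := {S | ∃ i, S = {i}}

/-- Wythoff's game: the permissible sets are `{1}`, `{2}` and `{1,2}`. -/
def WythoffSets : Set (Finset (Fin 2)) := {{0}, {1}, {0, 1}}

/-- The index of the largest Fibonacci number not exceeding `n`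
(for `n ≥ 1` this index is at least `2`, matching the convention that the
Fibonacci number `1` is used with index `2`). -/
def greatestFibIdx (n : ℕ) : ℕ := Nat.findGreatest (fun i => Nat.fib i ≤ n) (n + 2)

lemma greatestFibIdx_le (n : ℕ) (hn : 0 < n) : Nat.fib (greatestFibIdx n) ≤ n :=
  Nat.findGreatest_spec (P := fun i => Nat.fib i ≤ n) (m := 2) (by omega) (by simp; omega)

lemma two_le_greatestFibIdx (n : ℕ) (hn : 0 < n) : 2 ≤ greatestFibIdx n :=
  Nat.le_findGreatest (P := fun i => Nat.fib i ≤ n) (by omega) (by simp; omega)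

/-- The Fibonacci successor `σ(n)`: replace each Fibonacci number in the
Zeckendorf representation of `n` (computed greedily: subtract the largest
Fibonacci number not greater than `n`, and repeat) with the next Fibonacci
number; `σ(0) = 0`. -/
def fibSucc (n : ℕ) : ℕ :=
  if hn : n = 0 then 0
  else Nat.fib (greatestFibIdx n + 1) + fibSucc (n - Nat.fib (greatestFibIdx n))
termination_by n
decreasing_by
  have h1 := greatestFibIdx_le n (by omega)
  have h2 := two_le_greatestFibIdx n (by omega)
  have h3 : 0 < Nat.fib (greatestFibIdx n) := Nat.fib_pos.mpr (by omega)
  omega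

/-!
The P-positions of Wythoff's game are the pairs `(⌊nφ⌋, ⌊nφ⌋ + n)` and their swaps. This set is
the kernel of the game graph: no move joins two of its elements, because each of them is
determined by either coordinate and by the difference of the coordinates; and every other
position has a move into it, because by Rayleigh's theorem the lower and upper Wythoff
sequences partition the positive integers. Finally `F (2n+1) φ = F (2n+2) - ψ ^ (2n+1)` with
`-1 < ψ ^ (2n+1) < 0`, so `⌊F (2n+1) φ⌋ = F (2n+2)` and `(F (2n+2), F (2n+3))` is such a
pair; every positive Fibonacci number is `F (2n)` or `F (2n+1)` with `n ≥ 1`, and its partner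
is then forced.
-/

open Real
open scoped goldenRatio

section CMNim

variable {k : ℕ} {𝒮 : Set (Finset (Fin k))}

theorem cmpPos_iff_mem_of_stable_of_absorbing (W : Set (Fin k → ℕ))
    (stable : ∀ p ∈ W, ∀ q ∈ W, ¬CMMove 𝒮 p q)
    (absorbing : ∀ p ∉ W, ∃ q ∈ W, CMMove 𝒮 p q) (p : Fin k → ℕ) :
    CMPPos 𝒮 p ↔ p ∈ W := by
  induction hs : ∑ i, p i using Nat.strong_induction_on generalizing p with
  | _ s ih =>
  have ih' : ∀ q, CMMove 𝒮 p q → (CMPPos 𝒮 q ↔ q ∈ W) :=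
    fun q hmove => ih _ (hs ▸ hmove.sum_lt) q rfl
  rw [CMPPos]
  constructor
  · intro hP
    by_contra hp
    obtain ⟨q, hq, hmove⟩ := absorbing p hp
    exact hP q hmove ((ih' q hmove).2 hq)
  · intro hp q hmove hq
    exact stable p hp q ((ih' q hmove).1 hq) hmove

end CMNim

theorem cmMove_wythoff_iff {x y a b : ℕ} :
    CMMove WythoffSets ![x, y] ![a, b] ↔
      ∃ c > 0, (x = a + c ∧ y = b) ∨ (x = a ∧ y = b + c) ∨ (x = a + c ∧ y = b + c) := by
  constructor
  · rintro ⟨S, hS, -, c, hc, hin, hout⟩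
    refine ⟨c, hc, ?_⟩
    simp only [WythoffSets, Set.mem_insert_iff, Set.mem_singleton_iff] at hS
    rcases hS with rfl | rfl | rfl <;> simp [Fin.forall_fin_two] at hin hout <;> omega
  · rintro ⟨c, hc, h | h | h⟩
    · exact ⟨{0}, by simp [WythoffSets], by simp, c, hc, by simp; omega, by simp; omega⟩
    · exact ⟨{1}, by simp [WythoffSets], by simp, c, hc, by simp; omega, by simp; omega⟩
    · exact ⟨{0, 1}, by simp [WythoffSets], by simp, c, hc, by simp; omega, by simp⟩

noncomputable def lowerWythoff (n : ℕ) : ℕ := ⌊(n : ℝ) * φ⌋₊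

noncomputable def upperWythoff (n : ℕ) : ℕ := lowerWythoff n + n

@[simp]
theorem lowerWythoff_zero : lowerWythoff 0 = 0 := by simp [lowerWythoff]

@[simp]
theorem upperWythoff_zero : upperWythoff 0 = 0 := by simp [upperWythoff]

theorem le_lowerWythoff (n : ℕ) : n ≤ lowerWythoff n :=
  Nat.le_floor (le_mul_of_one_le_right n.cast_nonneg one_lt_goldenRatio.le)

theorem lowerWythoff_strictMono : StrictMono lowerWythoff := by
  intro n m hnm
  have hstep : (n : ℝ) * φ + 1 ≤ m * φ := by
    have : (n : ℝ) + 1 ≤ m := by exact_mod_cast hnm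
    nlinarith [one_lt_goldenRatio]
  calc lowerWythoff n < ⌊(n : ℝ) * φ⌋₊ + 1 := Nat.lt_succ_self _
    _ = ⌊(n : ℝ) * φ + 1⌋₊ := (Nat.floor_add_one (by positivity)).symm
    _ ≤ lowerWythoff m := Nat.floor_le_floor hstep

theorem upperWythoff_strictMono : StrictMono upperWythoff :=
  lowerWythoff_strictMono.add_monotone monotone_id

theorem holderConjugate_goldenRatio : Real.HolderConjugate φ (φ + 1) := by
  rw [Real.holderConjugate_iff]
  refine ⟨one_lt_goldenRatio, ?_⟩
  rw [← goldenRatio_sq, ← inv_pow, inv_goldenRatio, neg_sq, goldenConj_sq]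
  ring

theorem beattySeq_goldenRatio (n : ℕ) : beattySeq φ n = lowerWythoff n := by
  rw [beattySeq, lowerWythoff, Int.natCast_floor_eq_floor (by positivity), Int.cast_natCast]

theorem beattySeq_goldenRatio_add_one (n : ℕ) : beattySeq (φ + 1) n = upperWythoff n := by
  rw [upperWythoff, Nat.cast_add, ← beattySeq_goldenRatio, beattySeq, beattySeq, mul_add_one,
    ← Int.cast_natCast, Int.floor_add_intCast]

theorem exists_pos_beattySeq_eq_iff {r : ℝ} {f : ℕ → ℕ} (hf : ∀ n : ℕ, beattySeq r n = f n)
    (x : ℕ) : (∃ k > 0, beattySeq r k = x) ↔ ∃ n > 0, f n = x := by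
  constructor
  · rintro ⟨k, hk, hkx⟩
    lift k to ℕ using hk.le
    exact ⟨k, by omega, by rw [hf] at hkx; exact_mod_cast hkx⟩
  · rintro ⟨n, hn, rfl⟩
    exact ⟨n, by omega, hf n⟩

theorem xor_exists_lowerWythoff_upperWythoff {x : ℕ} (hx : 0 < x) :
    Xor (∃ n > 0, lowerWythoff n = x) (∃ n > 0, upperWythoff n = x) := by
  have h := Set.ext_iff.1 (goldenRatio_irrational.beattySeq_symmDiff_beattySeq_pos
    holderConjugate_goldenRatio) (x : ℤ)
  simpa only [xor_def, Set.mem_symmDiff, Set.mem_ofPred_eq, Nat.cast_pos, hx, iff_true,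
    exists_pos_beattySeq_eq_iff beattySeq_goldenRatio,
    exists_pos_beattySeq_eq_iff beattySeq_goldenRatio_add_one] using h

theorem lowerWythoff_eq_upperWythoff_iff {n m : ℕ} :
    lowerWythoff n = upperWythoff m ↔ n = 0 ∧ m = 0 := by
  refine ⟨fun h => ?_, fun ⟨hn, hm⟩ => by simp [hn, hm]⟩
  have := le_lowerWythoff n
  have := le_lowerWythoff m
  rcases Nat.eq_zero_or_pos n with rfl | hn0
  · simp [upperWythoff] at h; omega
  rcases Nat.eq_zero_or_pos m with rfl | hm0
  · simp at h; omega
  have hx := xor_exists_lowerWythoff_upperWythoff (x := lowerWythoff n) (by omega)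
  exact (((xor_iff_or_and_not_and _ _).1 hx).2 ⟨⟨n, hn0, rfl⟩, ⟨m, hm0, h.symm⟩⟩).elim

theorem exists_lowerWythoff_or_upperWythoff_eq (x : ℕ) :
    (∃ n, lowerWythoff n = x) ∨ ∃ n, upperWythoff n = x := by
  rcases Nat.eq_zero_or_pos x with rfl | hx
  · exact .inl ⟨0, lowerWythoff_zero⟩
  rcases xor_exists_lowerWythoff_upperWythoff hx with ⟨⟨n, -, h⟩, -⟩ | ⟨⟨n, -, h⟩, -⟩
  · exact .inl ⟨n, h⟩
  · exact .inr ⟨n, h⟩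

def IsWythoffPair (x y : ℕ) : Prop :=
  ∃ n, (x = lowerWythoff n ∧ y = upperWythoff n) ∨ (x = upperWythoff n ∧ y = lowerWythoff n)

namespace IsWythoffPair

variable {x y a b c : ℕ}

theorem symm (h : IsWythoffPair x y) : IsWythoffPair y x :=
  let ⟨n, hn⟩ := h; ⟨n, hn.symm.imp And.symm And.symm⟩

theorem right_unique {y' : ℕ} (h : IsWythoffPair x y) (h' : IsWythoffPair x y') : y = y' := by
  obtain ⟨n, ⟨rfl, rfl⟩ | ⟨rfl, rfl⟩⟩ := h <;> obtain ⟨m, ⟨hx, rfl⟩ | ⟨hx, rfl⟩⟩ := h'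
  · rw [lowerWythoff_strictMono.injective hx]
  · obtain ⟨rfl, rfl⟩ := lowerWythoff_eq_upperWythoff_iff.1 hx; simp
  · obtain ⟨rfl, rfl⟩ := lowerWythoff_eq_upperWythoff_iff.1 hx.symm; simp
  · rw [upperWythoff_strictMono.injective hx]

theorem left_unique {x' : ℕ} (h : IsWythoffPair x y) (h' : IsWythoffPair x' y) : x = x' :=
  h.symm.right_unique h'.symm

theorem eq_zero_of_add (h : IsWythoffPair (a + c) (b + c)) (h' : IsWythoffPair a b) : c = 0 := by
  obtain ⟨n, ⟨hx, hy⟩ | ⟨hx, hy⟩⟩ := h <;> obtain ⟨m, ⟨rfl, rfl⟩ | ⟨rfl, rfl⟩⟩ := h' <;>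
    simp only [upperWythoff] at hx hy ⊢
  · obtain rfl : n = m := by omega
    omega
  · obtain ⟨rfl, rfl⟩ : n = 0 ∧ m = 0 := by omega
    simpa using hx
  · obtain ⟨rfl, rfl⟩ : n = 0 ∧ m = 0 := by omega
    simpa using hy
  · obtain rfl : n = m := by omega
    omega

theorem exists_of_le (hxy : x ≤ y) (h : ¬IsWythoffPair x y) :
    (∃ b c, 0 < c ∧ y = b + c ∧ IsWythoffPair x b) ∨
      ∃ a b c, 0 < c ∧ x = a + c ∧ y = b + c ∧ IsWythoffPair a b := by
  rcases exists_lowerWythoff_or_upperWythoff_eq x with ⟨n, rfl⟩ | ⟨n, rfl⟩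
  · have hne : y ≠ upperWythoff n := fun hy => h ⟨n, .inl ⟨rfl, hy⟩⟩
    rcases hne.lt_or_gt with hy | hy
    · -- the pair with the same difference `d` as `(x, y)` lies diagonally below it
      set d := y - lowerWythoff n
      have hdn : d < n := by simp only [upperWythoff] at hy; omega
      have := lowerWythoff_strictMono hdn
      refine .inr ⟨lowerWythoff d, upperWythoff d, lowerWythoff n - lowerWythoff d, by omega,
        by omega, by simp only [upperWythoff]; omega, d, .inl ⟨rfl, rfl⟩⟩
    · exact .inl ⟨upperWythoff n, y - upperWythoff n, by omega, by omega, n, .inl ⟨rfl, rfl⟩⟩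
  · have hlt : lowerWythoff n < y :=
      (Nat.le_add_right _ n |>.trans hxy).lt_of_ne fun hy => h ⟨n, .inr ⟨rfl, hy.symm⟩⟩
    exact .inl ⟨lowerWythoff n, y - lowerWythoff n, by omega, by omega, n, .inr ⟨rfl, rfl⟩⟩

theorem not_cmMove (h : IsWythoffPair x y) (h' : IsWythoffPair a b) :
    ¬CMMove WythoffSets ![x, y] ![a, b] := by
  rw [cmMove_wythoff_iff]
  rintro ⟨c, hc, ⟨rfl, rfl⟩ | ⟨rfl, rfl⟩ | ⟨rfl, rfl⟩⟩
  · have := h.left_unique h'; omega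
  · have := h.right_unique h'; omega
  · have := h.eq_zero_of_add h'; omega

theorem exists_cmMove (h : ¬IsWythoffPair x y) :
    ∃ a b, IsWythoffPair a b ∧ CMMove WythoffSets ![x, y] ![a, b] := by
  simp only [cmMove_wythoff_iff]
  rcases le_total x y with hxy | hyx
  · rcases exists_of_le hxy h with ⟨b, c, hc, rfl, hb⟩ | ⟨a, b, c, hc, rfl, rfl, hab⟩
    · exact ⟨x, b, hb, c, hc, by omega⟩
    · exact ⟨a, b, hab, c, hc, by omega⟩
  · rcases exists_of_le hyx (mt symm h) with
      ⟨a, c, hc, rfl, ha⟩ | ⟨b, a, c, hc, rfl, rfl, hab⟩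
    · exact ⟨a, y, ha.symm, c, hc, by omega⟩
    · exact ⟨a, b, hab.symm, c, hc, by omega⟩

end IsWythoffPair

theorem cmpPos_wythoff_iff (x y : ℕ) : CMPPos WythoffSets ![x, y] ↔ IsWythoffPair x y := by
  refine cmpPos_iff_mem_of_stable_of_absorbing {p | IsWythoffPair (p 0) (p 1)} ?_ ?_ ![x, y]
  · intro p hp q hq
    rw [← FinVec.etaExpand_eq p, ← FinVec.etaExpand_eq q]
    exact IsWythoffPair.not_cmMove hp hq
  · intro p hp
    obtain ⟨a, b, hab, hmove⟩ := IsWythoffPair.exists_cmMove hp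
    rw [← FinVec.etaExpand_eq p]
    exact ⟨![a, b], hab, hmove⟩

theorem lowerWythoff_fib_odd (n : ℕ) :
    lowerWythoff (Nat.fib (2 * n + 1)) = Nat.fib (2 * n + 2) := by
  have hfib := fib_succ_sub_goldenRatio_mul_fib (2 * n + 1)
  have hneg : ψ ^ (2 * n + 1) < 0 := Odd.pow_neg ⟨n, rfl⟩ goldenConj_neg
  have hgt : -1 < ψ ^ (2 * n + 1) := by
    rw [pow_succ, pow_mul]
    have : (ψ ^ 2) ^ n ≤ 1 :=
      pow_le_one₀ (sq_nonneg ψ) (by rw [goldenConj_sq]; linarith [goldenConj_neg])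
    nlinarith [neg_one_lt_goldenConj, goldenConj_neg]
  rw [lowerWythoff, Nat.floor_eq_iff (by positivity)]
  constructor <;> linarith

theorem isWythoffPair_fib {n : ℕ} (hn : 1 ≤ n) :
    IsWythoffPair (Nat.fib (2 * n)) (Nat.fib (2 * n + 1)) := by
  obtain ⟨k, rfl⟩ := Nat.exists_eq_add_of_le' hn
  refine ⟨Nat.fib (2 * k + 1), .inl ⟨?_, ?_⟩⟩
  · rw [lowerWythoff_fib_odd, mul_add_one]
  · rw [upperWythoff, lowerWythoff_fib_odd, show 2 * (k + 1) + 1 = 2 * k + 1 + 2 by ring,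
      Nat.fib_add_two, add_comm]

theorem exists_fib_eq_fib_two_mul {m : ℕ} (hm : 0 < m) :
    ∃ n, 1 ≤ n ∧ (Nat.fib m = Nat.fib (2 * n) ∨ Nat.fib m = Nat.fib (2 * n + 1)) := by
  obtain ⟨k, rfl | rfl⟩ := Nat.even_or_odd' m
  · exact ⟨k, by omega, .inl rfl⟩
  · rcases Nat.eq_zero_or_pos k with rfl | hk
    · exact ⟨1, le_rfl, .inl rfl⟩
    · exact ⟨k, hk, .inr rfl⟩

theorem IsWythoffPair.eq_fib_of_fib_left {m y : ℕ} (hm : 0 < m)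
    (h : IsWythoffPair (Nat.fib m) y) :
    ∃ n, 1 ≤ n ∧ ((Nat.fib m = Nat.fib (2 * n) ∧ y = Nat.fib (2 * n + 1)) ∨
      (Nat.fib m = Nat.fib (2 * n + 1) ∧ y = Nat.fib (2 * n))) := by
  obtain ⟨n, hn, hfib | hfib⟩ := exists_fib_eq_fib_two_mul hm <;> rw [hfib] at h ⊢
  · exact ⟨n, hn, .inl ⟨rfl, h.right_unique (isWythoffPair_fib hn)⟩⟩
  · exact ⟨n, hn, .inr ⟨rfl, h.right_unique (isWythoffPair_fib hn).symm⟩⟩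

/-- For every `n ≥ 1`, the pair `(F (2n), F (2n+1))` of consecutive Fibonacci
numbers is a P-position of Wythoff's game, and these are the only P-positions
with both entries positive in which one of the entries is a Fibonacci number
(the two jars being interchangeable). -/
theorem wythoff_fib_ppos :
    (∀ n : ℕ, 1 ≤ n →
      CMPPos WythoffSets ![Nat.fib (2 * n), Nat.fib (2 * n + 1)]) ∧
    (∀ p : Fin 2 → ℕ, CMPPos WythoffSets p → 0 < p 0 → 0 < p 1 →
      ((∃ m, p 0 = Nat.fib m) ∨ (∃ m, p 1 = Nat.fib m)) →
      ∃ n : ℕ, 1 ≤ n ∧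
        ((p 0 = Nat.fib (2 * n) ∧ p 1 = Nat.fib (2 * n + 1)) ∨
         (p 0 = Nat.fib (2 * n + 1) ∧ p 1 = Nat.fib (2 * n)))) := by
  refine ⟨fun n hn => (cmpPos_wythoff_iff _ _).2 (isWythoffPair_fib hn), ?_⟩
  intro p hp h0 h1 hfib
  replace hp : IsWythoffPair (p 0) (p 1) :=
    (cmpPos_wythoff_iff _ _).1 (FinVec.etaExpand_eq p ▸ hp)
  rcases hfib with ⟨m, hm⟩ | ⟨m, hm⟩
  · rw [hm] at hp h0 ⊢
    exact hp.eq_fib_of_fib_left (Nat.fib_pos.1 h0)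
  · rw [hm] at hp h1 ⊢
    obtain ⟨n, hn, h⟩ := hp.symm.eq_fib_of_fib_left (Nat.fib_pos.1 h1)
    exact ⟨n, hn, h.symm.imp And.symm And.symm⟩
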